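/- arXiv:1803.04521 — 3 statements merged into one kernel-verified Lean document; each statement's English description precedes it below -/
import Mathlib

section
/- Let N ≥ 2, l and m be nonnegative integers with 0 ≤ l ≤ N−1 and 1 ≤ m ≤ N. Then e^{m(N−m)/(2(N−1))} ≤ E[exp((U_l(m,N))²)] ≤ e^{m²}, where the expectation equals C(N,m)^{−1} · Σ_{S ⊆ {1,…,N}, |S|=m} exp((Σ_{n∈S} cos(2πnl/N))²). -/
open Real Finset

lemma count_superset (T A : Finset ℕ) (hA : A ⊆ T) (m : ℕ) (hm : A.card ≤ m) :
    ((T.powersetCard m).filter (fun S => A ⊆ S)).card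
      = (T.card - A.card).choose (m - A.card) := by
  rw [show T.card - A.card = (T \ A).card from (Finset.card_sdiff_of_subset hA).symm,
    ← Finset.card_powersetCard (m - A.card) (T \ A)]
  apply Finset.card_nbij' (fun S => S \ A) (fun S => S ∪ A)
  · intro S hS
    simp only [Finset.mem_coe, Finset.mem_filter, Finset.mem_powersetCard] at hS ⊢
    exact ⟨Finset.sdiff_subset_sdiff hS.1.1 Subset.rfl,
      by rw [Finset.card_sdiff_of_subset hS.2, hS.1.2]⟩
  · intro S hS
    simp only [Finset.mem_coe, Finset.mem_filter, Finset.mem_powersetCard] at hS ⊢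
    have hdisj : Disjoint S A := (Finset.subset_sdiff.mp hS.1).2
    refine ⟨⟨Finset.union_subset (hS.1.trans (Finset.sdiff_subset)) hA, ?_⟩,
      Finset.subset_union_right⟩
    rw [Finset.card_union_of_disjoint hdisj, hS.2]
    omega
  · intro S hS
    simp only [Finset.mem_coe, Finset.mem_filter, Finset.mem_powersetCard] at hS
    exact Finset.sdiff_union_of_subset hS.2
  · intro S hS
    simp only [Finset.mem_coe, Finset.mem_filter, Finset.mem_powersetCard] at hS
    exact Finset.union_sdiff_cancel_right (Finset.subset_sdiff.mp hS.1).2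

lemma sum_cos_eq_zero (N l : ℕ) (hN : 0 < N) (h : ¬ (N ∣ l)) :
    ∑ n ∈ Finset.Icc 1 N, Real.cos (2 * Real.pi * n * l / N) = 0 := by
  have hl : l ≠ 0 := by rintro rfl; exact h (dvd_zero N)
  set w : ℂ := Complex.exp ((2 * Real.pi * l / N : ℝ) * Complex.I) with hw
  have hwpow : ∀ n : ℕ, w ^ n = Complex.exp ((2 * Real.pi * n * l / N : ℝ) * Complex.I) := by
    intro n
    rw [hw, ← Complex.exp_nat_mul]
    congr 1
    push_cast
    ring
  have hwN : w ^ N = 1 := by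
    rw [hwpow]
    have hN' : (N : ℝ) ≠ 0 := Nat.cast_ne_zero.mpr hN.ne'
    have h1 : (2 * Real.pi * N * l / N : ℝ) = (l : ℝ) * (2 * Real.pi) := by
      field_simp
    rw [h1, show (((l : ℝ) * (2 * Real.pi) : ℝ) : ℂ) * Complex.I
        = (l : ℤ) * (2 * Real.pi * Complex.I) by push_cast; ring]
    exact Complex.exp_int_mul_two_pi_mul_I l
  have hw1 : w ≠ 1 := by
    intro hcontra
    rw [hw, Complex.exp_eq_one_iff] at hcontra
    obtain ⟨k, hk⟩ := hcontra
    have hN' : (N : ℝ) ≠ 0 := Nat.cast_ne_zero.mpr hN.ne'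
    have him := congrArg Complex.im hk
    simp [Complex.mul_I_im] at him
    -- him : 2 * π * l / N = k * (2 * π)  (in ℝ) roughly
    have hpi := Real.pi_pos
    have hlk : (l : ℝ) = (k : ℝ) * N := by
      field_simp at him
      nlinarith [him]
    have hlkz : (l : ℤ) = k * N := by exact_mod_cast hlk
    exact h (Int.natCast_dvd_natCast.mp ⟨k, by linarith⟩)
  have hgeom : ∑ n ∈ Finset.range N, w ^ n = 0 := by
    have := geom_sum_eq hw1 N
    rw [this, hwN, sub_self, zero_div]
  have hsum : ∑ n ∈ Finset.Icc 1 N, w ^ n = 0 := by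
    rw [show Finset.Icc 1 N = Finset.Ico 1 (N + 1) by rw [Finset.Ico_add_one_right_eq_Icc],
      Finset.sum_Ico_eq_sum_range]
    simp only [Nat.add_sub_cancel]
    calc ∑ n ∈ Finset.range N, w ^ (1 + n) = w * ∑ n ∈ Finset.range N, w ^ n := by
          rw [Finset.mul_sum]; exact Finset.sum_congr rfl fun n _ => by rw [pow_add, pow_one]
      _ = 0 := by rw [hgeom, mul_zero]
  have : ∑ n ∈ Finset.Icc 1 N, Real.cos (2 * Real.pi * n * l / N)
      = (∑ n ∈ Finset.Icc 1 N, w ^ n).re := by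
    rw [Complex.re_sum]
    exact Finset.sum_congr rfl fun n _ => by rw [hwpow, Complex.exp_ofReal_mul_I_re]
  rw [this, hsum, Complex.zero_re]

lemma sum_cos_sq_ge (N l : ℕ) (hN : 2 ≤ N) (hl1 : 1 ≤ l) (hl2 : l ≤ N - 1) :
    (N : ℝ) / 2 ≤ ∑ n ∈ Finset.Icc 1 N, Real.cos (2 * Real.pi * n * l / N) ^ 2 := by
  have hN' : (N : ℝ) ≠ 0 := Nat.cast_ne_zero.mpr (by omega)
  have hcard : (Finset.Icc 1 N).card = N := by rw [Nat.card_Icc]; omega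
  have key : ∑ n ∈ Finset.Icc 1 N, Real.cos (2 * Real.pi * n * l / N) ^ 2
      = (N : ℝ) / 2 + (1 / 2) * ∑ n ∈ Finset.Icc 1 N,
          Real.cos (2 * Real.pi * n * (2 * l : ℕ) / N) := by
    have : ∀ n ∈ Finset.Icc 1 N, Real.cos (2 * Real.pi * n * l / N) ^ 2
        = 1 / 2 + (1 / 2) * Real.cos (2 * Real.pi * n * (2 * l : ℕ) / N) := by
      intro n _
      rw [Real.cos_sq, show 2 * (2 * Real.pi * n * l / N)
          = 2 * Real.pi * n * ((2 * l : ℕ) : ℝ) / N by push_cast; ring]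
      ring
    rw [Finset.sum_congr rfl this, Finset.sum_add_distrib, Finset.sum_const, hcard,
      Finset.mul_sum, ← Finset.mul_sum]
    simp [nsmul_eq_mul]
    ring
  rw [key]
  by_cases hdvd : N ∣ 2 * l
  · obtain ⟨c, hc⟩ := hdvd
    have hc1 : c = 1 := by
      rcases Nat.lt_or_ge c 2 with h | h
      · interval_cases c <;> omega
      · have := Nat.mul_le_mul (le_refl N) h
        omega
    have h2l : 2 * l = N := by subst hc1; omega
    have : ∀ n ∈ Finset.Icc 1 N, Real.cos (2 * Real.pi * n * (2 * l : ℕ) / N) = 1 := by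
      intro n _
      rw [h2l, show 2 * Real.pi * n * (N : ℝ) / N = n * (2 * Real.pi) by field_simp]
      exact Real.cos_nat_mul_two_pi n
    rw [Finset.sum_congr rfl this, Finset.sum_const, hcard]
    simp

  · rw [sum_cos_eq_zero N (2 * l) (by omega) hdvd]
    simp

lemma sq_sum_expand (T : Finset ℕ) (m : ℕ) (c : ℕ → ℝ) :
    ∑ S ∈ T.powersetCard m, (∑ n ∈ S, c n) ^ 2
      = ∑ n ∈ T, ∑ k ∈ T, c n * c k *
          (((T.powersetCard m).filter (fun S => n ∈ S ∧ k ∈ S)).card : ℝ) := by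
  have step1 : ∀ S ∈ T.powersetCard m, (∑ n ∈ S, c n) ^ 2
      = ∑ n ∈ T, ∑ k ∈ T, (if n ∈ S ∧ k ∈ S then c n * c k else 0) := by
    intro S hS
    have hST : S ⊆ T := (Finset.mem_powersetCard.mp hS).1
    have h1 : (∑ n ∈ S, c n) = ∑ n ∈ T, (if n ∈ S then c n else 0) := by
      rw [Finset.sum_ite_mem, Finset.inter_eq_right.mpr hST]
    rw [sq, h1, Finset.sum_mul_sum]
    refine Finset.sum_congr rfl fun n _ => Finset.sum_congr rfl fun k _ => ?_
    rw [ite_zero_mul_ite_zero]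
  rw [Finset.sum_congr rfl step1, Finset.sum_comm]
  refine Finset.sum_congr rfl fun n _ => ?_
  rw [Finset.sum_comm]
  refine Finset.sum_congr rfl fun k _ => ?_
  rw [← Finset.sum_filter, Finset.sum_const, nsmul_eq_mul, mul_comm]


lemma count_diag' (T : Finset ℕ) (m n : ℕ) (hn : n ∈ T) (hm : 1 ≤ m) :
    ((T.powersetCard m).filter (fun S => n ∈ S ∧ n ∈ S)).card
      = (T.card - 1).choose (m - 1) := by
  have h := count_superset T {n} (Finset.singleton_subset_iff.mpr hn) m (by simpa using hm)
  rw [Finset.card_singleton] at h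
  rw [← h]
  congr 1
  apply Finset.filter_congr
  intro S _
  simp [Finset.singleton_subset_iff]

lemma count_off (T : Finset ℕ) (m n k : ℕ) (hn : n ∈ T) (hk : k ∈ T) (hnk : n ≠ k)
    (hm : 2 ≤ m) :
    ((T.powersetCard m).filter (fun S => n ∈ S ∧ k ∈ S)).card
      = (T.card - 2).choose (m - 2) := by
  have hsub : ({n, k} : Finset ℕ) ⊆ T := by
    intro x hx; simp at hx; rcases hx with rfl | rfl <;> assumption
  have hcard2 : ({n, k} : Finset ℕ).card = 2 := Finset.card_pair hnk
  have h := count_superset T {n, k} hsub m (by rw [hcard2]; exact hm)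
  rw [hcard2] at h
  rw [← h]
  congr 1
  apply Finset.filter_congr
  intro S _
  simp [Finset.insert_subset_iff, Finset.singleton_subset_iff]

lemma count_off_one (T : Finset ℕ) (n k : ℕ) (hnk : n ≠ k) :
    ((T.powersetCard 1).filter (fun S => n ∈ S ∧ k ∈ S)).card = 0 := by
  rw [Finset.card_eq_zero, Finset.filter_eq_empty_iff]
  intro S hS
  rintro ⟨hn, hk⟩
  have : 1 < S.card := Finset.one_lt_card.mpr ⟨n, hn, k, hk, hnk⟩
  rw [(Finset.mem_powersetCard.mp hS).2] at this
  omega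

lemma choose_id1 (N m : ℕ) (h1 : 1 ≤ m) (h2 : m ≤ N) :
    N * (N - 1).choose (m - 1) = N.choose m * m := by
  obtain ⟨a, rfl⟩ : ∃ a, N = a + 1 := ⟨N - 1, by omega⟩
  obtain ⟨b, rfl⟩ : ∃ b, m = b + 1 := ⟨m - 1, by omega⟩
  simpa using Nat.add_one_mul_choose_eq a b

lemma choose_le (N m : ℕ) (h1 : 2 ≤ m) (h2 : 2 ≤ N) :
    (N - 2).choose (m - 2) ≤ (N - 1).choose (m - 1) := by
  obtain ⟨a, rfl⟩ : ∃ a, N = a + 2 := ⟨N - 2, by omega⟩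
  obtain ⟨b, rfl⟩ : ∃ b, m = b + 2 := ⟨m - 2, by omega⟩
  simp only [Nat.add_sub_cancel, show a + 2 - 1 = a + 1 by omega, show b + 2 - 1 = b + 1 by omega]
  rw [Nat.choose_succ_succ]
  omega

lemma E2_eq (T : Finset ℕ) (m : ℕ) (c : ℕ → ℝ) (hm : 2 ≤ m) (hsum : ∑ n ∈ T, c n = 0) :
    ∑ S ∈ T.powersetCard m, (∑ n ∈ S, c n) ^ 2
      = (((T.card - 1).choose (m - 1) : ℝ) - ((T.card - 2).choose (m - 2) : ℝ))
          * ∑ n ∈ T, c n ^ 2 := by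
  rw [sq_sum_expand, Finset.mul_sum]
  refine Finset.sum_congr rfl fun n hn => ?_
  rw [← Finset.add_sum_erase _ _ hn, count_diag' T m n hn (by omega)]
  have herase : ∑ k ∈ T.erase n, c n * c k *
        (((T.powersetCard m).filter (fun S => n ∈ S ∧ k ∈ S)).card : ℝ)
      = (c n * ((T.card - 2).choose (m - 2) : ℝ)) * ∑ k ∈ T.erase n, c k := by
    rw [Finset.mul_sum]
    refine Finset.sum_congr rfl fun k hk => ?_
    rw [count_off T m n k hn (Finset.mem_of_mem_erase hk)
      (fun h => (Finset.mem_erase.mp hk).1 h.symm) hm]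
    ring
  rw [herase, Finset.sum_erase_eq_sub hn, hsum]
  ring

lemma E2_eq_one (T : Finset ℕ) (c : ℕ → ℝ) :
    ∑ S ∈ T.powersetCard 1, (∑ n ∈ S, c n) ^ 2 = ∑ n ∈ T, c n ^ 2 := by
  rw [sq_sum_expand]
  refine Finset.sum_congr rfl fun n hn => ?_
  rw [← Finset.add_sum_erase _ _ hn, count_diag' T 1 n hn le_rfl]
  have herase : ∑ k ∈ T.erase n, c n * c k *
        (((T.powersetCard 1).filter (fun S => n ∈ S ∧ k ∈ S)).card : ℝ) = 0 := by
    refine Finset.sum_eq_zero fun k hk => ?_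
    rw [count_off_one T n k (fun h => (Finset.mem_erase.mp hk).1 h.symm)]
    simp
  rw [herase]
  simp [Nat.choose_zero_right]
  ring

lemma coeff_eq (N m : ℕ) (hm : 2 ≤ m) (hmN : m ≤ N) :
    (((N - 1).choose (m - 1) : ℝ) - ((N - 2).choose (m - 2) : ℝ)) * ((N : ℝ) * ((N : ℝ) - 1))
      = (m : ℝ) * ((N : ℝ) - m) * (N.choose m : ℝ) := by
  obtain ⟨a, rfl⟩ : ∃ a, m = a + 2 := ⟨m - 2, by omega⟩
  obtain ⟨b, rfl⟩ : ∃ b, N = b + (a + 2) := ⟨N - (a + 2), by omega⟩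
  simp only [show b + (a + 2) - 1 = b + a + 1 by omega, show a + 2 - 1 = a + 1 by omega,
    show b + (a + 2) - 2 = b + a by omega, Nat.add_sub_cancel]
  have E1 : ((b + a + 2 : ℕ) : ℝ) * ((b + a + 1).choose (a + 1) : ℝ)
      = ((b + (a + 2)).choose (a + 2) : ℝ) * ((a + 2 : ℕ) : ℝ) := by
    exact_mod_cast congrArg (Nat.cast : ℕ → ℝ)
      (by rw [show b + (a+2) = (b+a+1)+1 by omega]; exact Nat.add_one_mul_choose_eq (b+a+1) (a+1))
  have E2 : ((b + a + 1 : ℕ) : ℝ) * ((b + a).choose a : ℝ)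
      = ((b + a + 1).choose (a + 1) : ℝ) * ((a + 1 : ℕ) : ℝ) := by
    exact_mod_cast congrArg (Nat.cast : ℕ → ℝ) (Nat.add_one_mul_choose_eq (b + a) a)
  push_cast at E1 E2 ⊢
  linear_combination (b : ℝ) * E1 - ((b : ℝ) + a + 2) * E2


/-- Theorem 2.2 (ii): `e^{m(N-m)/(2(N-1))} ≤ E[exp(U_l(m,N)²)] ≤ e^{m²}`. -/
theorem subGaussian_U_bounds' (N l m : ℕ) (hN : 2 ≤ N) (hl : l ≤ N - 1)
    (hm1 : 1 ≤ m) (hmN : m ≤ N) :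
    Real.exp ((m : ℝ) * ((N : ℝ) - m) / (2 * ((N : ℝ) - 1))) ≤
      ((N.choose m : ℝ))⁻¹ * ∑ S ∈ (Finset.Icc 1 N).powersetCard m,
        Real.exp ((∑ n ∈ S, Real.cos (2 * Real.pi * n * l / N)) ^ 2) ∧
    ((N.choose m : ℝ))⁻¹ * ∑ S ∈ (Finset.Icc 1 N).powersetCard m,
        Real.exp ((∑ n ∈ S, Real.cos (2 * Real.pi * n * l / N)) ^ 2) ≤
      Real.exp ((m : ℝ) ^ 2) := by
  have hT : (Finset.Icc 1 N).card = N := by rw [Nat.card_Icc]; omega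
  have hP : ((Finset.Icc 1 N).powersetCard m).card = N.choose m := by
    rw [Finset.card_powersetCard, hT]
  have hC : (0 : ℝ) < (N.choose m : ℝ) := by
    exact_mod_cast Nat.choose_pos hmN
  have hN2 : (2 : ℝ) ≤ (N : ℝ) := by exact_mod_cast hN
  have hm1' : (1 : ℝ) ≤ (m : ℝ) := by exact_mod_cast hm1
  have hmN' : (m : ℝ) ≤ (N : ℝ) := by exact_mod_cast hmN
  constructor
  · -- lower bound
    have hJ := convexOn_exp.map_sum_le (t := (Finset.Icc 1 N).powersetCard m)
      (w := fun _ => ((N.choose m : ℝ))⁻¹)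
      (p := fun S => (∑ n ∈ S, Real.cos (2 * Real.pi * n * l / N)) ^ 2)
      (fun _ _ => by positivity)
      (by rw [Finset.sum_const, hP, nsmul_eq_mul]; exact mul_inv_cancel₀ (ne_of_gt hC))
      (fun _ _ => Set.mem_univ _)
    simp only [smul_eq_mul] at hJ
    rw [← Finset.mul_sum, ← Finset.mul_sum] at hJ
    refine le_trans ?_ hJ
    rw [Real.exp_le_exp]
    by_cases hl0 : l = 0
    · subst hl0
      have hx : ∀ S ∈ (Finset.Icc 1 N).powersetCard m,
          (∑ n ∈ S, Real.cos (2 * Real.pi * n * (0 : ℕ) / N)) ^ 2 = (m : ℝ) ^ 2 := by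
        intro S hS
        have : ∀ n ∈ S, Real.cos (2 * Real.pi * n * (0 : ℕ) / N) = 1 := by
          intro n _; norm_num
        rw [Finset.sum_congr rfl this, Finset.sum_const,
          (Finset.mem_powersetCard.mp hS).2, nsmul_eq_mul, mul_one]
      rw [Finset.sum_congr rfl hx, Finset.sum_const, hP, nsmul_eq_mul, ← mul_assoc,
        inv_mul_cancel₀ (ne_of_gt hC), one_mul]
      rw [div_le_iff₀ (by nlinarith)]
      have e1 : (0:ℝ) ≤ ((m:ℝ) * (N:ℝ)) * ((m:ℝ) - 1) :=
        mul_nonneg (by positivity) (by linarith)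
      have e2 : (0:ℝ) ≤ ((m:ℝ) * (m:ℝ)) * ((N:ℝ) - 1) :=
        mul_nonneg (by positivity) (by linarith)
      nlinarith [e1, e2]
    · have hndvd : ¬ N ∣ l := by
        intro hdvd
        have := Nat.le_of_dvd (by omega) hdvd
        omega
      have hsum0 : ∑ n ∈ Finset.Icc 1 N, Real.cos (2 * Real.pi * n * l / N) = 0 :=
        sum_cos_eq_zero N l (by omega) hndvd
      have hsq : (N : ℝ) / 2 ≤ ∑ n ∈ Finset.Icc 1 N, Real.cos (2 * Real.pi * n * l / N) ^ 2 :=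
        sum_cos_sq_ge N l hN (by omega) hl
      rcases eq_or_lt_of_le hm1 with hm1e | hm2
      · -- m = 1
        have hm1e : m = 1 := hm1e.symm
        subst hm1e
        have hE2 : ∑ S ∈ (Finset.Icc 1 N).powersetCard 1,
            (∑ n ∈ S, Real.cos (2 * Real.pi * n * l / N)) ^ 2
            = ∑ n ∈ Finset.Icc 1 N, Real.cos (2 * Real.pi * n * l / N) ^ 2 :=
          E2_eq_one _ _
        rw [hE2, Nat.choose_one_right]
        have h1 : (1 : ℝ) * ((N : ℝ) - 1) / (2 * ((N : ℝ) - 1)) = 1 / 2 := by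
          rw [one_mul, div_eq_div_iff (by nlinarith) (by norm_num)]
          ring
        rw [Nat.cast_one, h1]
        calc (1 : ℝ) / 2 = (N : ℝ)⁻¹ * ((N : ℝ) / 2) := by field_simp
          _ ≤ (N : ℝ)⁻¹ * ∑ n ∈ Finset.Icc 1 N, Real.cos (2 * Real.pi * n * l / N) ^ 2 := by
              apply mul_le_mul_of_nonneg_left hsq (by positivity)
      · -- 2 ≤ m
        have hm2' : 2 ≤ m := hm2
        have hE2 : ∑ S ∈ (Finset.Icc 1 N).powersetCard m,
            (∑ n ∈ S, Real.cos (2 * Real.pi * n * l / N)) ^ 2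
            = ((((Finset.Icc 1 N).card - 1).choose (m - 1) : ℝ)
                - (((Finset.Icc 1 N).card - 2).choose (m - 2) : ℝ))
              * ∑ n ∈ Finset.Icc 1 N, Real.cos (2 * Real.pi * n * l / N) ^ 2 :=
          E2_eq _ m _ hm2' hsum0
        rw [hT] at hE2
        rw [hE2]
        set K : ℝ := (((N - 1).choose (m - 1) : ℝ) - ((N - 2).choose (m - 2) : ℝ)) with hK
        have hceq := coeff_eq N m hm2' hmN
        have hNN : (0 : ℝ) < (N : ℝ) * ((N : ℝ) - 1) := by nlinarith
        have hK0 : 0 ≤ K := by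
          rw [← mul_nonneg_iff_of_pos_right hNN, hceq]
          have : (0:ℝ) ≤ (m : ℝ) * ((N : ℝ) - m) := by nlinarith
          positivity
        have heq : ((N.choose m : ℝ))⁻¹ * (K * ((N : ℝ) / 2))
            = (m : ℝ) * ((N : ℝ) - m) / (2 * ((N : ℝ) - 1)) := by
          rw [eq_div_iff (by nlinarith)]
          field_simp
          linear_combination hceq
        calc (m : ℝ) * ((N : ℝ) - m) / (2 * ((N : ℝ) - 1))
            = ((N.choose m : ℝ))⁻¹ * (K * ((N : ℝ) / 2)) := heq.symm
          _ ≤ ((N.choose m : ℝ))⁻¹ * (K * ∑ n ∈ Finset.Icc 1 N,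
                Real.cos (2 * Real.pi * n * l / N) ^ 2) := by
              apply mul_le_mul_of_nonneg_left _ (by positivity)
              exact mul_le_mul_of_nonneg_left hsq hK0
  · -- upper bound
    have hterm : ∀ S ∈ (Finset.Icc 1 N).powersetCard m,
        Real.exp ((∑ n ∈ S, Real.cos (2 * Real.pi * n * l / N)) ^ 2)
          ≤ Real.exp ((m : ℝ) ^ 2) := by
      intro S hS
      rw [Real.exp_le_exp]
      have habs : |∑ n ∈ S, Real.cos (2 * Real.pi * n * l / N)| ≤ (m : ℝ) := by
        calc |∑ n ∈ S, Real.cos (2 * Real.pi * n * l / N)|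
            ≤ ∑ n ∈ S, |Real.cos (2 * Real.pi * n * l / N)| := Finset.abs_sum_le_sum_abs _ _
          _ ≤ ∑ n ∈ S, 1 := Finset.sum_le_sum fun n _ => Real.abs_cos_le_one _
          _ = (m : ℝ) := by
              rw [Finset.sum_const, (Finset.mem_powersetCard.mp hS).2, nsmul_eq_mul, mul_one]
      have h1 := abs_le.mp habs
      nlinarith [h1.1, h1.2]
    calc ((N.choose m : ℝ))⁻¹ * ∑ S ∈ (Finset.Icc 1 N).powersetCard m,
          Real.exp ((∑ n ∈ S, Real.cos (2 * Real.pi * n * l / N)) ^ 2)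
        ≤ ((N.choose m : ℝ))⁻¹ * ∑ S ∈ (Finset.Icc 1 N).powersetCard m,
            Real.exp ((m : ℝ) ^ 2) := by
          apply mul_le_mul_of_nonneg_left (Finset.sum_le_sum hterm) (by positivity)
      _ = Real.exp ((m : ℝ) ^ 2) := by
          rw [Finset.sum_const, hP, nsmul_eq_mul, ← mul_assoc,
            inv_mul_cancel₀ (ne_of_gt hC), one_mul]
end

section
/- Let N ≥ 2, l and m be nonnegative integers with 0 ≤ l ≤ N−1 and 1 ≤ m ≤ N. Then √(m(N−m)/((N−1)·ln 2)) ≤ ‖|X_l(m,N)|‖_{ψ₂} ≤ m/√(ln 2), where ‖|X_l(m,N)|‖_{ψ₂} = inf{K > 0 : C(N,m)^{−1} Σ_{S ⊆ {1,…,N}, |S|=m} exp(|Σ_{n∈S} exp(−2πi n l/N)|²/K²) ≤ 2}. -/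
open Real Finset

lemma count_subsets_containing (A B : Finset ℕ) (hBA : B ⊆ A) (k : ℕ) (hk : B.card ≤ k) :
    ((A.powersetCard k).filter (fun S => B ⊆ S)).card
      = (A.card - B.card).choose (k - B.card) := by
  rw [← Finset.card_sdiff_of_subset hBA, ← Finset.card_powersetCard (k - B.card) (A \ B)]
  apply Finset.card_bij (fun S _ => S \ B)
  · intro S hS
    simp only [Finset.mem_filter, Finset.mem_powersetCard] at hS
    obtain ⟨⟨hSA, hScard⟩, hBS⟩ := hS
    exact Finset.mem_powersetCard.2 ⟨Finset.sdiff_subset_sdiff hSA le_rfl,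
      by rw [Finset.card_sdiff_of_subset hBS, hScard]⟩
  · intro S hS S' hS' h
    simp only [Finset.mem_filter, Finset.mem_powersetCard] at hS hS'
    have := congrArg (· ∪ B) h
    simpa [Finset.sdiff_union_of_subset hS.2, Finset.sdiff_union_of_subset hS'.2] using this
  · intro T hT
    rw [Finset.mem_powersetCard] at hT
    obtain ⟨hTAB, hTcard⟩ := hT
    have hdisj : Disjoint T B := Finset.disjoint_left.2 fun x hx =>
      (Finset.mem_sdiff.1 (hTAB hx)).2
    refine ⟨T ∪ B, ?_, ?_⟩
    · simp only [Finset.mem_filter, Finset.mem_powersetCard]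
      refine ⟨⟨Finset.union_subset (hTAB.trans Finset.sdiff_subset) hBA, ?_⟩,
        Finset.subset_union_right⟩
      rw [Finset.card_union_of_disjoint hdisj, hTcard]
      omega
    · rw [Finset.union_sdiff_right, Finset.sdiff_eq_self_of_disjoint hdisj]

lemma sum_powersetCard_double (A : Finset ℕ) (m : ℕ) (g : ℕ → ℕ → ℂ) :
    ∑ S ∈ A.powersetCard m, ∑ n ∈ S, ∑ n' ∈ S, g n n'
      = ∑ p ∈ A ×ˢ A,
          (((A.powersetCard m).filter (fun S => p.1 ∈ S ∧ p.2 ∈ S)).card : ℂ) * g p.1 p.2 := by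
  have h1 : ∀ S ∈ A.powersetCard m, ∑ n ∈ S, ∑ n' ∈ S, g n n'
      = ∑ p ∈ A ×ˢ A, if p.1 ∈ S ∧ p.2 ∈ S then g p.1 p.2 else 0 := by
    intro S hS
    have hSA : S ⊆ A := (Finset.mem_powersetCard.1 hS).1
    rw [← Finset.sum_product', ← Finset.sum_filter]
    refine (Finset.sum_congr ?_ fun _ _ => rfl)
    ext p
    simp only [Finset.mem_product, Finset.mem_filter]
    exact ⟨fun h => ⟨⟨hSA h.1, hSA h.2⟩, h⟩, fun h => h.2⟩
  rw [Finset.sum_congr rfl h1, Finset.sum_comm]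
  refine Finset.sum_congr rfl fun p hp => ?_
  rw [← Finset.sum_filter, Finset.sum_const, nsmul_eq_mul]

lemma sum_exp_eq_zero (N l : ℕ) (hN : 2 ≤ N) (hl0 : l ≠ 0) (hl : l ≤ N - 1) :
    ∑ n ∈ Finset.Icc 1 N, Complex.exp (-(2 * Real.pi * n * l / N : ℝ) * Complex.I) = 0 := by
  set ω : ℂ := Complex.exp (-(2 * Real.pi * l / N : ℝ) * Complex.I) with hω
  have hNne : (N : ℝ) ≠ 0 := by positivity
  have hNC : (N : ℂ) ≠ 0 := by exact_mod_cast (by positivity : (0:ℝ) < N).ne'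
  have hen : ∀ n : ℕ, Complex.exp (-(2 * Real.pi * n * l / N : ℝ) * Complex.I) = ω ^ n := by
    intro n
    rw [hω, ← Complex.exp_nat_mul]
    congr 1
    push_cast
    field_simp
  have hωN : ω ^ N = 1 := by
    rw [hω, ← Complex.exp_nat_mul, Complex.exp_eq_one_iff]
    refine ⟨-l, ?_⟩
    push_cast
    field_simp
  have hω1 : ω ≠ 1 := by
    intro h
    rw [hω, Complex.exp_eq_one_iff] at h
    obtain ⟨k, hk⟩ := h
    have him := congrArg Complex.im hk
    simp [Complex.mul_im] at him
    have hπ := Real.pi_ne_zero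
    field_simp at him
    have h2 : 2 * Real.pi * ((l : ℝ) + k * N) = 0 := by linear_combination (-2 * Real.pi) * him
    have h3 : (l : ℝ) + k * N = 0 := by
      rcases mul_eq_zero.1 h2 with h | h
      · exfalso; exact (by positivity : (0:ℝ) < 2 * Real.pi).ne' h
      · exact h
    have hlN : (l : ℝ) = (N : ℝ) * (-k) := by push_cast; linarith
    have hlNZ : (l : ℤ) = (N : ℤ) * (-k) := by exact_mod_cast hlN
    have hdvd : (N : ℤ) ∣ (l : ℤ) := ⟨-k, hlNZ⟩
    have hpos : (0 : ℤ) < l := by exact_mod_cast Nat.pos_of_ne_zero hl0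
    have := Int.le_of_dvd hpos hdvd
    omega
  rw [Finset.sum_congr rfl fun n _ => hen n, ← Finset.Ico_add_one_right_eq_Icc,
    Finset.sum_Ico_eq_sum_range]
  have hr : N + 1 - 1 = N := rfl
  rw [hr]
  have : ∀ i ∈ Finset.range N, ω ^ (1 + i) = ω * ω ^ i := fun i _ => by rw [pow_add, pow_one]
  rw [Finset.sum_congr rfl this, ← Finset.mul_sum, geom_sum_eq hω1, hωN]
  simp

lemma sum_sq_eq (N l m : ℕ) (hN : 2 ≤ N) (hl0 : l ≠ 0) (hl : l ≤ N - 1)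
    (hm2 : 2 ≤ m) (hmN : m ≤ N) :
    ∑ S ∈ (Finset.Icc 1 N).powersetCard m,
        (‖(∑ n ∈ S, Complex.exp (-(2 * Real.pi * n * l / N : ℝ) * Complex.I))‖) ^ 2
      = ((N-1).choose (m-1) : ℝ) * N - ((N-2).choose (m-2) : ℝ) * N := by
  set A := Finset.Icc 1 N with hAdef
  set e : ℕ → ℂ := fun n => Complex.exp (-(2 * Real.pi * n * l / N : ℝ) * Complex.I) with he
  have hA : A.card = N := by simp [hAdef]
  set a := (N-1).choose (m-1) with hadef
  set b := (N-2).choose (m-2) with hbdef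
  have hone : ∀ n : ℕ, e n * (starRingEnd ℂ) (e n) = 1 := by
    intro n
    rw [Complex.mul_conj]
    norm_cast
    rw [Complex.normSq_eq_norm_sq, Complex.norm_exp]
    simp
  have hC : ∑ S ∈ A.powersetCard m, (∑ n ∈ S, e n) * (starRingEnd ℂ) (∑ n ∈ S, e n)
      = ((a : ℂ) - b) * N := by
    have hexp : ∀ S : Finset ℕ, (∑ n ∈ S, e n) * (starRingEnd ℂ) (∑ n ∈ S, e n)
        = ∑ n ∈ S, ∑ n' ∈ S, e n * (starRingEnd ℂ) (e n') := by
      intro S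
      rw [map_sum, Finset.sum_mul_sum]
    rw [Finset.sum_congr rfl fun S _ => hexp S,
      sum_powersetCard_double A m (fun n n' => e n * (starRingEnd ℂ) (e n'))]
    have hcount : ∀ p ∈ A ×ˢ A,
        (((A.powersetCard m).filter (fun S => p.1 ∈ S ∧ p.2 ∈ S)).card : ℂ)
          * (e p.1 * (starRingEnd ℂ) (e p.2))
        = (if p.1 = p.2 then (a : ℂ) else (b : ℂ)) * (e p.1 * (starRingEnd ℂ) (e p.2)) := by
      intro p hp
      rw [Finset.mem_product] at hp
      congr 1
      by_cases h : p.1 = p.2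
      · have hpred : (A.powersetCard m).filter (fun S => p.1 ∈ S ∧ p.2 ∈ S)
            = (A.powersetCard m).filter (fun S => {p.1} ⊆ S) := by
          apply Finset.filter_congr; intro S _; simp [← h, and_self]
        rw [hpred, count_subsets_containing A {p.1} (by simpa using hp.1) m
          (by simpa using hm2.trans' one_le_two)]
        simp [h, hA, hadef]
      · have hpred : (A.powersetCard m).filter (fun S => p.1 ∈ S ∧ p.2 ∈ S)
            = (A.powersetCard m).filter (fun S => {p.1, p.2} ⊆ S) := by
          apply Finset.filter_congr; intro S _; simp [Finset.insert_subset_iff]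
        rw [hpred, count_subsets_containing A {p.1, p.2}
          (Finset.insert_subset hp.1 (by simpa using hp.2)) m
          (by rw [Finset.card_pair h]; exact hm2)]
        simp [h, hA, Finset.card_pair h, hbdef]
    rw [Finset.sum_congr rfl hcount]
    have hsplit : ∀ p : ℕ × ℕ,
        (if p.1 = p.2 then (a : ℂ) else (b : ℂ)) * (e p.1 * (starRingEnd ℂ) (e p.2))
        = (b : ℂ) * (e p.1 * (starRingEnd ℂ) (e p.2))
          + (if p.1 = p.2 then ((a : ℂ) - b) * (e p.1 * (starRingEnd ℂ) (e p.2)) else 0) := by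
      intro p
      by_cases h : p.1 = p.2 <;> simp [h] <;> ring
    rw [Finset.sum_congr rfl fun p _ => hsplit p, Finset.sum_add_distrib, ← Finset.mul_sum]
    have hgs : ∑ p ∈ A ×ˢ A, e p.1 * (starRingEnd ℂ) (e p.2)
        = (∑ n ∈ A, e n) * (starRingEnd ℂ) (∑ n ∈ A, e n) := by
      rw [map_sum, Finset.sum_mul_sum, Finset.sum_product]
    have hzero : (∑ n ∈ A, e n) = 0 := sum_exp_eq_zero N l hN hl0 hl
    have hdiag : ∑ p ∈ A ×ˢ A,
        (if p.1 = p.2 then ((a : ℂ) - b) * (e p.1 * (starRingEnd ℂ) (e p.2)) else 0)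
        = ((a : ℂ) - b) * N := by
      rw [Finset.sum_product]
      have : ∀ n ∈ A, (∑ n' ∈ A, if n = n' then ((a : ℂ) - b) * (e n * (starRingEnd ℂ) (e n')) else 0)
          = ((a : ℂ) - b) := by
        intro n hn
        rw [Finset.sum_ite_eq A n (fun n' => ((a : ℂ) - b) * (e n * (starRingEnd ℂ) (e n')))]
        simp [hn, hone n]
      rw [Finset.sum_congr rfl this, Finset.sum_const, hA, nsmul_eq_mul, mul_comm]
    rw [hgs, hzero, hdiag]
    simp
  have hcast : ((∑ S ∈ A.powersetCard m,
      (‖(∑ n ∈ S, e n)‖) ^ 2 : ℝ) : ℂ)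
      = ∑ S ∈ A.powersetCard m, (∑ n ∈ S, e n) * (starRingEnd ℂ) (∑ n ∈ S, e n) := by
    push_cast
    refine Finset.sum_congr rfl fun S _ => ?_
    rw [Complex.mul_conj, Complex.normSq_eq_norm_sq]
    norm_cast
  have := hcast.trans hC
  have h2 : ((∑ S ∈ A.powersetCard m, (‖(∑ n ∈ S, e n)‖) ^ 2 : ℝ) : ℂ)
      = (((a : ℝ) * N - (b : ℝ) * N : ℝ) : ℂ) := by
    rw [this]; push_cast; ring
  exact_mod_cast h2

lemma choose_id (N m : ℕ) (hN : 2 ≤ N) (hm2 : 2 ≤ m) (hmN : m ≤ N) :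
    (N.choose m : ℝ) * ((m : ℝ) * ((N : ℝ) - m) / ((N : ℝ) - 1))
      = ((N-1).choose (m-1) : ℝ) * N - ((N-2).choose (m-2) : ℝ) * N := by
  have h1 : N * (N-1).choose (m-1) = N.choose m * m := by
    have := Nat.add_one_mul_choose_eq (N-1) (m-1)
    have e1 : N - 1 + 1 = N := by omega
    have e2 : m - 1 + 1 = m := by omega
    simpa [Nat.succ_eq_add_one, e1, e2] using this
  have h2 : (N-1) * (N-2).choose (m-2) = (N-1).choose (m-1) * (m-1) := by
    have := Nat.add_one_mul_choose_eq (N-2) (m-2)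
    have e1 : N - 2 + 1 = N - 1 := by omega
    have e2 : m - 2 + 1 = m - 1 := by omega
    simpa [Nat.succ_eq_add_one, e1, e2] using this
  have h1' : (N : ℝ) * ((N-1).choose (m-1) : ℝ) = (N.choose m : ℝ) * m := by exact_mod_cast h1
  have h2' : ((N : ℝ) - 1) * ((N-2).choose (m-2) : ℝ)
      = ((N-1).choose (m-1) : ℝ) * ((m : ℝ) - 1) := by
    have h2c : ((N-1 : ℕ) : ℝ) * ((N-2).choose (m-2) : ℝ)
        = ((N-1).choose (m-1) : ℝ) * ((m-1 : ℕ) : ℝ) := by exact_mod_cast h2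
    rw [Nat.cast_sub (by omega : 1 ≤ N), Nat.cast_sub (by omega : 1 ≤ m)] at h2c
    simpa using h2c
  have hN1 : (N : ℝ) - 1 ≠ 0 := by
    have : (2 : ℝ) ≤ N := by exact_mod_cast hN
    linarith
  field_simp
  linear_combination (N : ℝ) * h2' - ((N : ℝ) - m) * h1'

lemma sum_sq_ge (N l m : ℕ) (hN : 2 ≤ N) (hl : l ≤ N - 1) (hm1 : 1 ≤ m) (hmN : m ≤ N) :
    (N.choose m : ℝ) * ((m : ℝ) * ((N : ℝ) - m) / ((N : ℝ) - 1))
      ≤ ∑ S ∈ (Finset.Icc 1 N).powersetCard m,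
          (‖(∑ n ∈ S, Complex.exp (-(2 * Real.pi * n * l / N : ℝ) * Complex.I))‖) ^ 2 := by
  have hN1 : (0 : ℝ) < (N : ℝ) - 1 := by
    have : (2 : ℝ) ≤ N := by exact_mod_cast hN
    linarith
  have hm' : (1 : ℝ) ≤ m := by exact_mod_cast hm1
  have hmN' : (m : ℝ) ≤ N := by exact_mod_cast hmN
  rcases eq_or_ne l 0 with rfl | hl0
  · -- l = 0 : every term equals m²
    simp only [Nat.cast_zero]
    have hterm : ∀ S ∈ (Finset.Icc 1 N).powersetCard m,
        (‖(∑ n ∈ S, Complex.exp (-(2 * Real.pi * n * 0 / N : ℝ) * Complex.I))‖) ^ 2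
          = (m : ℝ) ^ 2 := by
      intro S hS
      have hcard : S.card = m := (Finset.mem_powersetCard.1 hS).2
      simp only [Nat.cast_zero, mul_zero, zero_div, Complex.ofReal_zero, neg_zero, zero_mul,
        Complex.exp_zero, Finset.sum_const, hcard, nsmul_eq_mul, mul_one]
      simp
    rw [Finset.sum_congr rfl hterm, Finset.sum_const, Finset.card_powersetCard, Nat.card_Icc]
    simp only [Nat.add_sub_cancel, nsmul_eq_mul]
    have hle : (m : ℝ) * ((N : ℝ) - m) / ((N : ℝ) - 1) ≤ (m : ℝ) ^ 2 := by
      rw [div_le_iff₀ hN1]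
      nlinarith [mul_nonneg (mul_nonneg (by positivity : (0:ℝ) ≤ (m:ℝ))
        (by positivity : (0:ℝ) ≤ (N:ℝ))) (by linarith : (0:ℝ) ≤ (m:ℝ) - 1)]
    have hc : (0 : ℝ) ≤ (N.choose m : ℝ) := by positivity
    nlinarith [mul_le_mul_of_nonneg_left hle hc]
  rcases eq_or_lt_of_le hm1 with hm1' | hm2
  · -- m = 1 : every term equals 1
    subst hm1'
    have hterm : ∀ S ∈ (Finset.Icc 1 N).powersetCard 1,
        (‖(∑ n ∈ S, Complex.exp (-(2 * Real.pi * n * l / N : ℝ) * Complex.I))‖) ^ 2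
          = (1 : ℝ) := by
      intro S hS
      obtain ⟨n, rfl⟩ := Finset.card_eq_one.1 (Finset.mem_powersetCard.1 hS).2
      rw [Finset.sum_singleton, Complex.norm_exp]
      simp
    rw [Finset.sum_congr rfl hterm, Finset.sum_const, Finset.card_powersetCard, Nat.card_Icc]
    simp only [Nat.add_sub_cancel, nsmul_eq_mul, mul_one, Nat.cast_one, one_mul]
    rw [div_self hN1.ne']
    simp
  · have hm2' : 2 ≤ m := hm2
    rw [sum_sq_eq N l m hN hl0 hl hm2' hmN, ← choose_id N m hN hm2' hmN]

/-- Proposition 2.3 (i): the sub-Gaussian (Orlicz ψ₂) norm of `|X_l(m,N)|` satisfies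
`√(m(N-m)/((N-1)ln 2)) ≤ ‖|X_l(m,N)|‖_{ψ₂} ≤ m/√(ln 2)`. -/
theorem subGaussianNorm_X_bounds (N l m : ℕ) (hN : 2 ≤ N) (hl : l ≤ N - 1)
    (hm1 : 1 ≤ m) (hmN : m ≤ N) :
    Real.sqrt ((m : ℝ) * ((N : ℝ) - m) / (((N : ℝ) - 1) * Real.log 2)) ≤
      sInf {K : ℝ | 0 < K ∧
        ((N.choose m : ℝ))⁻¹ * ∑ S ∈ (Finset.Icc 1 N).powersetCard m,
          Real.exp ((‖(∑ n ∈ S,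
            Complex.exp (-(2 * Real.pi * n * l / N : ℝ) * Complex.I))‖) ^ 2 / K ^ 2) ≤ 2} ∧
    sInf {K : ℝ | 0 < K ∧
        ((N.choose m : ℝ))⁻¹ * ∑ S ∈ (Finset.Icc 1 N).powersetCard m,
          Real.exp ((‖(∑ n ∈ S,
            Complex.exp (-(2 * Real.pi * n * l / N : ℝ) * Complex.I))‖) ^ 2 / K ^ 2) ≤ 2} ≤
      (m : ℝ) / Real.sqrt (Real.log 2) := by
  have hc : (0 : ℝ) < (N.choose m : ℝ) := by exact_mod_cast Nat.choose_pos hmN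
  have hlog : (0 : ℝ) < Real.log 2 := Real.log_pos one_lt_two
  have hm' : (0 : ℝ) < m := by exact_mod_cast hm1
  have hcardP : ((Finset.Icc 1 N).powersetCard m).card = N.choose m := by
    rw [Finset.card_powersetCard, Nat.card_Icc, Nat.add_sub_cancel]
  have hK₀ : (0 : ℝ) < (m : ℝ) / Real.sqrt (Real.log 2) :=
    div_pos hm' (Real.sqrt_pos.2 hlog)
  have hK₀sq : ((m : ℝ) / Real.sqrt (Real.log 2)) ^ 2 = (m : ℝ) ^ 2 / Real.log 2 := by
    rw [div_pow, Real.sq_sqrt hlog.le]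
  -- membership of K₀ in the set
  have hmem : ((m : ℝ) / Real.sqrt (Real.log 2)) ∈ {K : ℝ | 0 < K ∧
      ((N.choose m : ℝ))⁻¹ * ∑ S ∈ (Finset.Icc 1 N).powersetCard m,
        Real.exp ((‖(∑ n ∈ S,
          Complex.exp (-(2 * Real.pi * n * l / N : ℝ) * Complex.I))‖) ^ 2 / K ^ 2) ≤ 2} := by
    refine ⟨hK₀, ?_⟩
    have hterm : ∀ S ∈ (Finset.Icc 1 N).powersetCard m,
        Real.exp ((‖(∑ n ∈ S,
          Complex.exp (-(2 * Real.pi * n * l / N : ℝ) * Complex.I))‖) ^ 2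
            / ((m : ℝ) / Real.sqrt (Real.log 2)) ^ 2) ≤ 2 := by
      intro S hS
      have hcard : S.card = m := (Finset.mem_powersetCard.1 hS).2
      have hFle : ‖(∑ n ∈ S,
          Complex.exp (-(2 * Real.pi * n * l / N : ℝ) * Complex.I))‖ ≤ m := by
        calc ‖(∑ n ∈ S, Complex.exp (-(2 * Real.pi * n * l / N : ℝ) * Complex.I))‖
            ≤ ∑ n ∈ S, ‖(Complex.exp (-(2 * Real.pi * n * l / N : ℝ) * Complex.I))‖ :=
              norm_sum_le _ _
          _ = ∑ n ∈ S, 1 := by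
              refine Finset.sum_congr rfl fun n _ => ?_
              rw [Complex.norm_exp]
              simp
          _ = m := by rw [Finset.sum_const, hcard]; simp
      have hsq : (‖(∑ n ∈ S,
          Complex.exp (-(2 * Real.pi * n * l / N : ℝ) * Complex.I))‖) ^ 2 ≤ (m : ℝ) ^ 2 :=
        pow_le_pow_left₀ (norm_nonneg _) hFle 2
      have hdiv : (‖(∑ n ∈ S,
          Complex.exp (-(2 * Real.pi * n * l / N : ℝ) * Complex.I))‖) ^ 2
            / ((m : ℝ) / Real.sqrt (Real.log 2)) ^ 2 ≤ Real.log 2 := by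
        rw [hK₀sq, div_le_iff₀ (by positivity)]
        calc (‖(∑ n ∈ S,
            Complex.exp (-(2 * Real.pi * n * l / N : ℝ) * Complex.I))‖) ^ 2 ≤ (m : ℝ) ^ 2 := hsq
          _ = Real.log 2 * ((m : ℝ) ^ 2 / Real.log 2) := by field_simp
      calc Real.exp _ ≤ Real.exp (Real.log 2) := Real.exp_le_exp.2 hdiv
        _ = 2 := Real.exp_log two_pos
    have hsum := Finset.sum_le_card_nsmul _ _ 2 hterm
    rw [hcardP, nsmul_eq_mul] at hsum
    calc ((N.choose m : ℝ))⁻¹ * ∑ S ∈ (Finset.Icc 1 N).powersetCard m,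
          Real.exp ((‖(∑ n ∈ S,
            Complex.exp (-(2 * Real.pi * n * l / N : ℝ) * Complex.I))‖) ^ 2
              / ((m : ℝ) / Real.sqrt (Real.log 2)) ^ 2)
        ≤ ((N.choose m : ℝ))⁻¹ * ((N.choose m : ℝ) * 2) :=
          mul_le_mul_of_nonneg_left hsum (by positivity)
      _ = 2 := by field_simp
  constructor
  · -- lower bound
    refine le_csInf ⟨_, hmem⟩ ?_
    rintro K ⟨hKpos, hKle⟩
    have hK2 : (0 : ℝ) < K ^ 2 := by positivity
    -- Jensen
    have h₁ : ∑ _S ∈ (Finset.Icc 1 N).powersetCard m, ((N.choose m : ℝ))⁻¹ = 1 := by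
      rw [Finset.sum_const, hcardP, nsmul_eq_mul, mul_inv_cancel₀ hc.ne']
    have hJ : Real.exp (∑ S ∈ (Finset.Icc 1 N).powersetCard m, ((N.choose m : ℝ))⁻¹ •
          ((‖(∑ n ∈ S,
            Complex.exp (-(2 * Real.pi * n * l / N : ℝ) * Complex.I))‖) ^ 2 / K ^ 2))
        ≤ ∑ S ∈ (Finset.Icc 1 N).powersetCard m, ((N.choose m : ℝ))⁻¹ •
          Real.exp ((‖(∑ n ∈ S,
            Complex.exp (-(2 * Real.pi * n * l / N : ℝ) * Complex.I))‖) ^ 2 / K ^ 2) :=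
      convexOn_exp.map_sum_le (fun _ _ => by positivity) h₁ (fun _ _ => Set.mem_univ _)
    have h2 : ∑ S ∈ (Finset.Icc 1 N).powersetCard m, ((N.choose m : ℝ))⁻¹ •
          Real.exp ((‖(∑ n ∈ S,
            Complex.exp (-(2 * Real.pi * n * l / N : ℝ) * Complex.I))‖) ^ 2 / K ^ 2) ≤ 2 := by
      simp only [smul_eq_mul, ← Finset.mul_sum]
      exact hKle
    have h3 : ∑ S ∈ (Finset.Icc 1 N).powersetCard m, ((N.choose m : ℝ))⁻¹ •
          ((‖(∑ n ∈ S,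
            Complex.exp (-(2 * Real.pi * n * l / N : ℝ) * Complex.I))‖) ^ 2 / K ^ 2)
        = ((N.choose m : ℝ))⁻¹ * (∑ S ∈ (Finset.Icc 1 N).powersetCard m,
          (‖(∑ n ∈ S,
            Complex.exp (-(2 * Real.pi * n * l / N : ℝ) * Complex.I))‖) ^ 2) / K ^ 2 := by
      simp only [smul_eq_mul, ← Finset.mul_sum, ← Finset.sum_div]
      ring
    have h4 : ((N.choose m : ℝ))⁻¹ * (∑ S ∈ (Finset.Icc 1 N).powersetCard m,
        (‖(∑ n ∈ S,
          Complex.exp (-(2 * Real.pi * n * l / N : ℝ) * Complex.I))‖) ^ 2) / K ^ 2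
        ≤ Real.log 2 := by
      have h2' := hJ.trans h2
      rw [h3] at h2'
      have h5 : Real.exp (((N.choose m : ℝ))⁻¹ * (∑ S ∈ (Finset.Icc 1 N).powersetCard m,
          (‖(∑ n ∈ S,
            Complex.exp (-(2 * Real.pi * n * l / N : ℝ) * Complex.I))‖) ^ 2) / K ^ 2)
          ≤ Real.exp (Real.log 2) := by rwa [Real.exp_log two_pos]
      exact Real.exp_le_exp.1 h5
    have hE : (m : ℝ) * ((N : ℝ) - m) / ((N : ℝ) - 1)
        ≤ ((N.choose m : ℝ))⁻¹ * (∑ S ∈ (Finset.Icc 1 N).powersetCard m,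
          (‖(∑ n ∈ S,
            Complex.exp (-(2 * Real.pi * n * l / N : ℝ) * Complex.I))‖) ^ 2) := by
      have := sum_sq_ge N l m hN hl hm1 hmN
      rw [← mul_le_mul_iff_of_pos_left hc, ← mul_assoc, mul_inv_cancel₀ hc.ne', one_mul]
      exact this
    have h6 : (m : ℝ) * ((N : ℝ) - m) / ((N : ℝ) - 1) / K ^ 2 ≤ Real.log 2 :=
      le_trans (div_le_div_of_nonneg_right hE hK2.le) h4
    have h7 : (m : ℝ) * ((N : ℝ) - m) / ((N : ℝ) - 1) ≤ K ^ 2 * Real.log 2 := by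
      rw [div_le_iff₀ hK2] at h6
      linarith
    have h8 : (m : ℝ) * ((N : ℝ) - m) / ((N : ℝ) - 1) / Real.log 2 ≤ K ^ 2 := by
      rw [div_le_iff₀ hlog]
      linarith
    calc Real.sqrt ((m : ℝ) * ((N : ℝ) - m) / (((N : ℝ) - 1) * Real.log 2))
        = Real.sqrt ((m : ℝ) * ((N : ℝ) - m) / ((N : ℝ) - 1) / Real.log 2) := by
          rw [div_div]
      _ ≤ Real.sqrt (K ^ 2) := Real.sqrt_le_sqrt h8
      _ = K := Real.sqrt_sq hKpos.le
  · exact csInf_le ⟨0, fun K hK => hK.1.le⟩ hmem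
end

section
/- Let N ≥ 2, l and m be integers with 1 ≤ l ≤ N−1, N ≠ 2l and 1 ≤ m ≤ N. Then √(m(N−m)/(2(N−1)·ln 2)) ≤ ‖V_l(m,N)‖_{ψ₂} ≤ m/√(ln 2), where ‖V_l(m,N)‖_{ψ₂} = inf{K > 0 : C(N,m)^{−1} Σ_{S ⊆ {1,…,N}, |S|=m} exp((Σ_{n∈S} sin(2πnl/N))²/K²) ≤ 2}. -/
open Real Finset

lemma sum_exp_range_eq_zero (N k : ℕ) (hN : 0 < N) (hk : ¬ N ∣ k) :
    ∑ n ∈ Finset.range N, Complex.exp (2 * Real.pi * Complex.I * n * k / N) = 0 := by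
  have hN0 : (N : ℂ) ≠ 0 := Nat.cast_ne_zero.mpr hN.ne'
  set ζ : ℂ := Complex.exp (2 * Real.pi * Complex.I * k / N) with hζdef
  have hterm : ∀ n : ℕ, Complex.exp (2 * Real.pi * Complex.I * n * k / N) = ζ ^ n := by
    intro n
    rw [hζdef, ← Complex.exp_nat_mul]
    congr 1
    ring
  have hζ1 : ζ ≠ 1 := by
    intro h
    rw [hζdef, Complex.exp_eq_one_iff] at h
    obtain ⟨n, hn⟩ := h
    have h2 : (2 * (Real.pi : ℂ) * Complex.I) ≠ 0 := by
      simp [Real.pi_ne_zero, Complex.I_ne_zero, Complex.ofReal_ne_zero]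
    have hk' : (k : ℂ) = n * N := by
      field_simp at hn
      have hcalc : (k : ℂ) * (2 * Real.pi * Complex.I) = (n * N) * (2 * Real.pi * Complex.I) := by
        rw [hn]; ring
      exact mul_right_cancel₀ h2 hcalc
    have hkZ : (k : ℤ) = n * N := by exact_mod_cast hk'
    exact hk (Int.natCast_dvd_natCast.mp ⟨n, by rw [hkZ]; ring⟩)
  have hζN : ζ ^ N = 1 := by
    rw [hζdef, ← Complex.exp_nat_mul]
    have : (N : ℂ) * (2 * Real.pi * Complex.I * k / N) = (k : ℤ) * (2 * Real.pi * Complex.I) := by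
      push_cast
      field_simp
    rw [this]
    exact Complex.exp_int_mul_two_pi_mul_I k
  calc ∑ n ∈ Finset.range N, Complex.exp (2 * Real.pi * Complex.I * n * k / N)
      = ∑ n ∈ Finset.range N, ζ ^ n := Finset.sum_congr rfl (fun n _ => hterm n)
    _ = (ζ ^ N - 1) / (ζ - 1) := geom_sum_eq hζ1 N
    _ = 0 := by rw [hζN]; simp

lemma sum_Icc_eq_sum_range' (f : ℕ → ℝ) (N : ℕ) (hN : 0 < N) (h : f 0 = f N) :
    ∑ n ∈ Finset.Icc 1 N, f n = ∑ n ∈ Finset.range N, f n := by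
  have h1 : Finset.Icc 1 N = insert N (Finset.Ico 1 N) := (Finset.Ico_insert_right hN).symm
  have h2 : Finset.range N = insert 0 (Finset.Ico 1 N) := by
    rw [Finset.range_eq_Ico]
    exact (Finset.insert_Ico_add_one_left_eq_Ico hN).symm
  rw [h1, h2, Finset.sum_insert (by simp), Finset.sum_insert (by simp), h]

lemma sum_sin_Icc_eq_zero (N k : ℕ) (hN : 0 < N) (hk : ¬ N ∣ k) :
    ∑ n ∈ Finset.Icc 1 N, Real.sin (2 * Real.pi * n * k / N) = 0 := by
  have hN0 : (N : ℝ) ≠ 0 := Nat.cast_ne_zero.mpr hN.ne'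
  have h0N : Real.sin (2 * Real.pi * (0:ℕ) * k / N) = Real.sin (2 * Real.pi * (N:ℕ) * k / N) := by
    have : 2 * Real.pi * (N:ℝ) * k / N = (2 * k : ℕ) * Real.pi := by
      push_cast; field_simp
    rw [this, Real.sin_nat_mul_pi]
    simp
  rw [sum_Icc_eq_sum_range' _ N hN h0N]
  have him : ∀ n : ℕ, Real.sin (2 * Real.pi * n * k / N)
      = (Complex.exp (2 * Real.pi * Complex.I * n * k / N)).im := by
    intro n
    have : (2 * Real.pi * Complex.I * n * k / N) = ((2 * Real.pi * n * k / N : ℝ) : ℂ) * Complex.I := by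
      push_cast; ring
    rw [this, Complex.exp_ofReal_mul_I_im]
  simp only [him]
  rw [← Complex.im_sum, sum_exp_range_eq_zero N k hN hk, Complex.zero_im]

lemma sum_cos_Icc_eq_zero (N k : ℕ) (hN : 0 < N) (hk : ¬ N ∣ k) :
    ∑ n ∈ Finset.Icc 1 N, Real.cos (2 * Real.pi * n * k / N) = 0 := by
  have hN0 : (N : ℝ) ≠ 0 := Nat.cast_ne_zero.mpr hN.ne'
  have h0N : Real.cos (2 * Real.pi * (0:ℕ) * k / N) = Real.cos (2 * Real.pi * (N:ℕ) * k / N) := by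
    have : 2 * Real.pi * (N:ℝ) * k / N = (k : ℝ) * (2 * Real.pi) := by
      field_simp
    rw [this, Real.cos_nat_mul_two_pi]
    simp
  rw [sum_Icc_eq_sum_range' _ N hN h0N]
  have hre : ∀ n : ℕ, Real.cos (2 * Real.pi * n * k / N)
      = (Complex.exp (2 * Real.pi * Complex.I * n * k / N)).re := by
    intro n
    have : (2 * Real.pi * Complex.I * n * k / N) = ((2 * Real.pi * n * k / N : ℝ) : ℂ) * Complex.I := by
      push_cast; ring
    rw [this, Complex.exp_ofReal_mul_I_re]
  simp only [hre]
  rw [← Complex.re_sum, sum_exp_range_eq_zero N k hN hk, Complex.zero_re]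

lemma sum_sin_sq_Icc (N l : ℕ) (hN : 2 ≤ N) (hl1 : 1 ≤ l) (hl : l ≤ N - 1) (hNl : N ≠ 2 * l) :
    ∑ n ∈ Finset.Icc 1 N, (Real.sin (2 * Real.pi * n * l / N)) ^ 2 = (N : ℝ) / 2 := by
  have hN0 : (N : ℝ) ≠ 0 := by positivity
  have hterm : ∀ n : ℕ, (Real.sin (2 * Real.pi * n * l / N)) ^ 2
      = 1 / 2 - Real.cos (2 * Real.pi * n * (2 * l : ℕ) / N) / 2 := by
    intro n
    rw [Real.sin_sq_eq_half_sub]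
    congr 2
    push_cast
    field_simp
  simp only [hterm]
  rw [Finset.sum_sub_distrib, Finset.sum_const, ← Finset.sum_div,
    sum_cos_Icc_eq_zero N (2 * l) (by omega) (by
      intro hdvd
      obtain ⟨t, ht⟩ := hdvd
      have h2 : t ≤ 1 := by
        by_contra hc
        push_neg at hc
        have := Nat.mul_le_mul_left N hc
        omega
      interval_cases t <;> omega)]
  rw [Nat.card_Icc]
  simp
  ring

lemma count_powersetCard_subset (s u : Finset ℕ) (m : ℕ) (hu : u ⊆ s) (hm : u.card ≤ m) :
    ((s.powersetCard m).filter (fun S => u ⊆ S)).card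
      = (s.card - u.card).choose (m - u.card) := by
  rw [← Finset.card_sdiff_of_subset hu, ← Finset.card_powersetCard (m - u.card) (s \ u)]
  apply Finset.card_bij' (fun S _ => S \ u) (fun A _ => A ∪ u)
  · intro S hS
    rw [Finset.mem_filter, Finset.mem_powersetCard] at hS
    obtain ⟨⟨hSs, hScard⟩, huS⟩ := hS
    rw [Finset.mem_powersetCard]
    constructor
    · exact Finset.sdiff_subset_sdiff hSs (le_refl u)
    · rw [Finset.card_sdiff_of_subset huS, hScard]
  · intro A hA
    rw [Finset.mem_powersetCard] at hA
    obtain ⟨hAs, hAcard⟩ := hA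
    have hdisj : Disjoint A u := (Finset.sdiff_disjoint.mono_left hAs)
    rw [Finset.mem_filter, Finset.mem_powersetCard]
    refine ⟨⟨?_, ?_⟩, Finset.subset_union_right⟩
    · exact Finset.union_subset (hAs.trans (Finset.sdiff_subset)) hu
    · rw [Finset.card_union_of_disjoint hdisj, hAcard]
      omega
  · intro S hS
    rw [Finset.mem_filter] at hS
    exact Finset.sdiff_union_of_subset hS.2
  · intro A hA
    rw [Finset.mem_powersetCard] at hA
    have hdisj : Disjoint A u := (Finset.sdiff_disjoint.mono_left hA.1)
    rw [Finset.union_sdiff_right, Finset.sdiff_eq_self_of_disjoint hdisj]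

lemma count_powersetCard_subset_zero (s u : Finset ℕ) (m : ℕ) (hm : m < u.card) :
    ((s.powersetCard m).filter (fun S => u ⊆ S)).card = 0 := by
  rw [Finset.card_eq_zero, Finset.filter_eq_empty_iff]
  intro S hS huS
  rw [Finset.mem_powersetCard] at hS
  have := Finset.card_le_card huS
  omega

lemma sum_sq_expand (s : Finset ℕ) (m : ℕ) (f : ℕ → ℝ) (c1 c2 : ℕ)
    (h1 : ∀ n ∈ s, ((s.powersetCard m).filter (fun S => n ∈ S)).card = c1)
    (h2 : ∀ n ∈ s, ∀ n' ∈ s.erase n,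
      ((s.powersetCard m).filter (fun S => n ∈ S ∧ n' ∈ S)).card = c2) :
    ∑ S ∈ s.powersetCard m, (∑ n ∈ S, f n) ^ 2
      = c1 * ∑ n ∈ s, f n ^ 2 + c2 * ∑ n ∈ s, ∑ n' ∈ s.erase n, f n * f n' := by
  have stepA : ∀ S ∈ s.powersetCard m, (∑ n ∈ S, f n) ^ 2
      = (∑ n ∈ s, if n ∈ S then f n ^ 2 else 0)
        + ∑ n ∈ s, ∑ n' ∈ s.erase n, if n ∈ S ∧ n' ∈ S then f n * f n' else 0 := by
    intro S hS
    have hSs : S ⊆ s := (Finset.mem_powersetCard.mp hS).1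
    have hint : s ∩ S = S := Finset.inter_eq_right.mpr hSs
    have e1 : (∑ n ∈ s, if n ∈ S then f n ^ 2 else 0) = ∑ n ∈ S, f n ^ 2 := by
      rw [Finset.sum_ite_mem, hint]
    have e2 : (∑ n ∈ s, ∑ n' ∈ s.erase n, if n ∈ S ∧ n' ∈ S then f n * f n' else 0)
        = ∑ n ∈ S, ∑ n' ∈ S.erase n, f n * f n' := by
      have e2a : ∀ n ∈ s, (∑ n' ∈ s.erase n, if n ∈ S ∧ n' ∈ S then f n * f n' else 0)
          = if n ∈ S then (∑ n' ∈ s.erase n, if n' ∈ S then f n * f n' else 0) else 0 := by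
        intro n _
        by_cases hn : n ∈ S <;> simp [hn]
      rw [Finset.sum_congr rfl e2a, Finset.sum_ite_mem, hint]
      refine Finset.sum_congr rfl (fun n hn => ?_)
      rw [Finset.sum_ite_mem]
      congr 1
      ext x
      simp only [Finset.mem_inter, Finset.mem_erase]
      constructor
      · rintro ⟨⟨hxn, _⟩, hxS⟩; exact ⟨hxn, hxS⟩
      · rintro ⟨hxn, hxS⟩; exact ⟨⟨hxn, hSs hxS⟩, hxS⟩
    rw [e1, e2, sq, Finset.sum_mul_sum]
    rw [← Finset.sum_add_distrib]
    refine Finset.sum_congr rfl (fun n hn => ?_)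
    rw [← Finset.add_sum_erase S (fun n' => f n * f n') hn, ← sq]
  rw [Finset.sum_congr rfl stepA, Finset.sum_add_distrib]
  congr 1
  · rw [Finset.sum_comm]
    rw [Finset.mul_sum]
    refine Finset.sum_congr rfl (fun n hn => ?_)
    rw [← Finset.sum_filter, Finset.sum_const, h1 n hn, nsmul_eq_mul]
  · rw [Finset.sum_comm]
    rw [Finset.mul_sum]
    refine Finset.sum_congr rfl (fun n hn => ?_)
    rw [Finset.sum_comm, Finset.mul_sum]
    refine Finset.sum_congr rfl (fun n' hn' => ?_)
    rw [← Finset.sum_filter, Finset.sum_const, h2 n hn n' hn', nsmul_eq_mul]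

lemma avg_sq_eq (N l m : ℕ) (hN : 2 ≤ N) (hl1 : 1 ≤ l) (hl : l ≤ N - 1)
    (hNl : N ≠ 2 * l) (hm1 : 1 ≤ m) (hmN : m ≤ N) :
    ((N.choose m : ℝ))⁻¹ * ∑ S ∈ (Finset.Icc 1 N).powersetCard m,
        (∑ n ∈ S, Real.sin (2 * Real.pi * n * l / N)) ^ 2
      = (m : ℝ) * ((N : ℝ) - m) / (2 * ((N : ℝ) - 1)) := by
  set s : Finset ℕ := Finset.Icc 1 N with hs
  set f : ℕ → ℝ := fun n => Real.sin (2 * Real.pi * n * l / N) with hf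
  have hscard : s.card = N := by rw [hs, Nat.card_Icc]; omega
  set c1 : ℕ := (N - 1).choose (m - 1) with hc1def
  set c2 : ℕ := if 2 ≤ m then (N - 2).choose (m - 2) else 0 with hc2def
  have h1 : ∀ n ∈ s, ((s.powersetCard m).filter (fun S => n ∈ S)).card = c1 := by
    intro n hn
    have : (s.powersetCard m).filter (fun S => n ∈ S)
        = (s.powersetCard m).filter (fun S => {n} ⊆ S) := by
      apply Finset.filter_congr; intro S _; simp
    rw [this, count_powersetCard_subset s {n} m (by simpa using hn)
      (by simpa using hm1), hscard, Finset.card_singleton]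
  have h2 : ∀ n ∈ s, ∀ n' ∈ s.erase n,
      ((s.powersetCard m).filter (fun S => n ∈ S ∧ n' ∈ S)).card = c2 := by
    intro n hn n' hn'
    have hne : n' ≠ n := (Finset.mem_erase.mp hn').1
    have hn's : n' ∈ s := (Finset.mem_erase.mp hn').2
    have hsub : ({n, n'} : Finset ℕ) ⊆ s := by
      intro x hx; rcases Finset.mem_insert.mp hx with h | h
      · exact h ▸ hn
      · exact (Finset.mem_singleton.mp h) ▸ hn's
    have hcardu : ({n, n'} : Finset ℕ).card = 2 := by
      rw [Finset.card_insert_of_notMem (by simpa using hne.symm), Finset.card_singleton]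
    have heq : (s.powersetCard m).filter (fun S => n ∈ S ∧ n' ∈ S)
        = (s.powersetCard m).filter (fun S => ({n, n'} : Finset ℕ) ⊆ S) := by
      apply Finset.filter_congr; intro S _
      simp [Finset.insert_subset_iff]
    rw [heq]
    by_cases hm2 : 2 ≤ m
    · rw [count_powersetCard_subset s {n, n'} m hsub (hcardu ▸ hm2), hscard, hcardu,
        hc2def, if_pos hm2]
    · rw [count_powersetCard_subset_zero s {n, n'} m (by omega), hc2def, if_neg hm2]
  have hsum0 : ∑ n ∈ s, f n = 0 :=
    sum_sin_Icc_eq_zero N l (by omega) (fun hdvd => by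
      have := Nat.le_of_dvd (by omega) hdvd
      omega)
  have hsumsq : ∑ n ∈ s, f n ^ 2 = (N : ℝ) / 2 := sum_sin_sq_Icc N l hN hl1 hl hNl
  have hoff : ∑ n ∈ s, ∑ n' ∈ s.erase n, f n * f n' = -((N : ℝ) / 2) := by
    have : ∀ n ∈ s, ∑ n' ∈ s.erase n, f n * f n' = -(f n ^ 2) := by
      intro n hn
      rw [← Finset.mul_sum, Finset.sum_erase_eq_sub hn, hsum0]
      ring
    rw [Finset.sum_congr rfl this, Finset.sum_neg_distrib, hsumsq]
  rw [sum_sq_expand s m f c1 c2 h1 h2, hsumsq, hoff]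
  -- choose identities
  have hichoose1 : N * c1 = N.choose m * m := by
    have hid := Nat.add_one_mul_choose_eq (N - 1) (m - 1)
    have e1 : N - 1 + 1 = N := by omega
    have e2 : m - 1 + 1 = m := by omega
    rw [e1, e2] at hid
    exact hid
  have hichoose2 : (N - 1) * c2 = c1 * (m - 1) := by
    by_cases hm2 : 2 ≤ m
    · rw [hc2def, if_pos hm2]
      have := Nat.add_one_mul_choose_eq (N - 2) (m - 2)
      have e1 : N - 2 + 1 = N - 1 := by omega
      have e2 : m - 2 + 1 = m - 1 := by omega
      rw [e1, e2] at this
      exact this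
    · rw [hc2def, if_neg hm2]
      have : m - 1 = 0 := by omega
      rw [this]
      simp
  have hc0pos : 0 < N.choose m := Nat.choose_pos hmN
  have hc0 : ((N.choose m : ℝ)) ≠ 0 := by positivity
  have hN1 : ((N : ℝ) - 1) ≠ 0 := by
    have : (2:ℝ) ≤ N := by exact_mod_cast hN
    linarith
  have hr1 : (N : ℝ) * c1 = (N.choose m : ℝ) * m := by exact_mod_cast hichoose1
  have hr2 : ((N : ℝ) - 1) * c2 = (c1 : ℝ) * ((m : ℝ) - 1) := by
    have : (((N - 1) * c2 : ℕ) : ℝ) = ((c1 * (m - 1) : ℕ) : ℝ) := by exact_mod_cast hichoose2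
    push_cast [Nat.cast_sub (by omega : 1 ≤ N), Nat.cast_sub hm1] at this
    linarith [this]
  have key : (N : ℝ) * ((N : ℝ) - 1) * ((c1 : ℝ) - c2) = (N.choose m : ℝ) * m * ((N : ℝ) - m) := by
    linear_combination ((N : ℝ) - m) * hr1 - (N : ℝ) * hr2
  have hNne : (N : ℝ) ≠ 0 := by positivity
  field_simp
  linear_combination key

/-- Proposition 2.3 (iii): with `1 ≤ l ≤ N-1` and `N ≠ 2l`, the sub-Gaussian norm of
`V_l(m,N)` satisfies `√(m(N-m)/(2(N-1)ln 2)) ≤ ‖V_l(m,N)‖_{ψ₂} ≤ m/√(ln 2)`. -/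
theorem subGaussianNorm_V_bounds (N l m : ℕ) (hN : 2 ≤ N) (hl1 : 1 ≤ l) (hl : l ≤ N - 1)
    (hNl : N ≠ 2 * l) (hm1 : 1 ≤ m) (hmN : m ≤ N) :
    Real.sqrt ((m : ℝ) * ((N : ℝ) - m) / (2 * ((N : ℝ) - 1) * Real.log 2)) ≤
      sInf {K : ℝ | 0 < K ∧
        ((N.choose m : ℝ))⁻¹ * ∑ S ∈ (Finset.Icc 1 N).powersetCard m,
          Real.exp ((∑ n ∈ S, Real.sin (2 * Real.pi * n * l / N)) ^ 2 / K ^ 2) ≤ 2} ∧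
    sInf {K : ℝ | 0 < K ∧
        ((N.choose m : ℝ))⁻¹ * ∑ S ∈ (Finset.Icc 1 N).powersetCard m,
          Real.exp ((∑ n ∈ S, Real.sin (2 * Real.pi * n * l / N)) ^ 2 / K ^ 2) ≤ 2} ≤
      (m : ℝ) / Real.sqrt (Real.log 2) := by
  have hlog : (0:ℝ) < Real.log 2 := Real.log_pos one_lt_two
  have hc0pos : 0 < N.choose m := Nat.choose_pos hmN
  have hc0 : (0:ℝ) < (N.choose m : ℝ) := by exact_mod_cast hc0pos
  have hmpos : (0:ℝ) < (m : ℝ) := by exact_mod_cast hm1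
  set K₀ : ℝ := (m : ℝ) / Real.sqrt (Real.log 2) with hK₀def
  have hK₀pos : 0 < K₀ := div_pos hmpos (Real.sqrt_pos.mpr hlog)
  have hK₀sq : K₀ ^ 2 = (m : ℝ) ^ 2 / Real.log 2 := by
    rw [hK₀def, div_pow, Real.sq_sqrt hlog.le]
  have hcardP : ((Finset.Icc 1 N).powersetCard m).card = N.choose m := by
    rw [Finset.card_powersetCard, Nat.card_Icc]
    norm_num
  -- K₀ is a member
  have hmem : 0 < K₀ ∧
      ((N.choose m : ℝ))⁻¹ * ∑ S ∈ (Finset.Icc 1 N).powersetCard m,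
        Real.exp ((∑ n ∈ S, Real.sin (2 * Real.pi * n * l / N)) ^ 2 / K₀ ^ 2) ≤ 2 := by
    refine ⟨hK₀pos, ?_⟩
    have hterm : ∀ S ∈ (Finset.Icc 1 N).powersetCard m,
        Real.exp ((∑ n ∈ S, Real.sin (2 * Real.pi * n * l / N)) ^ 2 / K₀ ^ 2) ≤ 2 := by
      intro S hS
      have hScard : S.card = m := (Finset.mem_powersetCard.mp hS).2
      have habs : |∑ n ∈ S, Real.sin (2 * Real.pi * n * l / N)| ≤ (m : ℝ) := by
        calc |∑ n ∈ S, Real.sin (2 * Real.pi * n * l / N)|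
            ≤ ∑ n ∈ S, |Real.sin (2 * Real.pi * n * l / N)| := Finset.abs_sum_le_sum_abs _ _
          _ ≤ ∑ n ∈ S, 1 := Finset.sum_le_sum (fun n _ => Real.abs_sin_le_one _)
          _ = (m : ℝ) := by rw [Finset.sum_const, hScard]; simp
      have hsq : (∑ n ∈ S, Real.sin (2 * Real.pi * n * l / N)) ^ 2 ≤ (m : ℝ) ^ 2 := by
        have h' := abs_le.mp habs
        exact sq_le_sq' h'.1 h'.2
      have : (∑ n ∈ S, Real.sin (2 * Real.pi * n * l / N)) ^ 2 / K₀ ^ 2 ≤ Real.log 2 := by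
        rw [hK₀sq, div_le_iff₀ (by positivity)]
        calc (∑ n ∈ S, Real.sin (2 * Real.pi * n * l / N)) ^ 2 ≤ (m:ℝ)^2 := hsq
          _ = Real.log 2 * ((m:ℝ)^2 / Real.log 2) := by field_simp
      calc Real.exp ((∑ n ∈ S, Real.sin (2 * Real.pi * n * l / N)) ^ 2 / K₀ ^ 2)
          ≤ Real.exp (Real.log 2) := Real.exp_le_exp.mpr this
        _ = 2 := Real.exp_log two_pos
    calc ((N.choose m : ℝ))⁻¹ * ∑ S ∈ (Finset.Icc 1 N).powersetCard m,
          Real.exp ((∑ n ∈ S, Real.sin (2 * Real.pi * n * l / N)) ^ 2 / K₀ ^ 2)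
        ≤ ((N.choose m : ℝ))⁻¹ * ∑ S ∈ (Finset.Icc 1 N).powersetCard m, (2:ℝ) := by
          apply mul_le_mul_of_nonneg_left (Finset.sum_le_sum hterm) (by positivity)
      _ = 2 := by
          rw [Finset.sum_const, hcardP, nsmul_eq_mul]
          field_simp
  have hbdd : BddBelow {K : ℝ | 0 < K ∧
      ((N.choose m : ℝ))⁻¹ * ∑ S ∈ (Finset.Icc 1 N).powersetCard m,
        Real.exp ((∑ n ∈ S, Real.sin (2 * Real.pi * n * l / N)) ^ 2 / K ^ 2) ≤ 2} :=
    ⟨0, fun K hK => hK.1.le⟩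
  constructor
  · -- lower bound
    apply le_csInf ⟨K₀, hmem⟩
    rintro K ⟨hKpos, hKle⟩
    -- Jensen
    have hw : ∑ _S ∈ (Finset.Icc 1 N).powersetCard m, ((N.choose m : ℝ))⁻¹ = 1 := by
      rw [Finset.sum_const, hcardP, nsmul_eq_mul]
      field_simp
    have hjensen := convexOn_exp.map_sum_le
      (t := (Finset.Icc 1 N).powersetCard m)
      (w := fun _ => ((N.choose m : ℝ))⁻¹)
      (p := fun S => (∑ n ∈ S, Real.sin (2 * Real.pi * n * l / N)) ^ 2 / K ^ 2)
      (fun _ _ => by positivity) hw (fun _ _ => Set.mem_univ _)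
    simp only [smul_eq_mul] at hjensen
    have havg : ∑ S ∈ (Finset.Icc 1 N).powersetCard m,
        ((N.choose m : ℝ))⁻¹ * ((∑ n ∈ S, Real.sin (2 * Real.pi * n * l / N)) ^ 2 / K ^ 2)
        = ((m : ℝ) * ((N : ℝ) - m) / (2 * ((N : ℝ) - 1))) / K ^ 2 := by
      rw [← Finset.mul_sum, ← Finset.sum_div, ← mul_div_assoc,
        avg_sq_eq N l m hN hl1 hl hNl hm1 hmN]
    have hexp2 : ∑ S ∈ (Finset.Icc 1 N).powersetCard m,
        ((N.choose m : ℝ))⁻¹ * Real.exp ((∑ n ∈ S, Real.sin (2 * Real.pi * n * l / N)) ^ 2 / K ^ 2)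
        ≤ 2 := by
      rw [← Finset.mul_sum]
      exact hKle
    have h3 : Real.exp (((m : ℝ) * ((N : ℝ) - m) / (2 * ((N : ℝ) - 1))) / K ^ 2) ≤ 2 :=
      (havg ▸ hjensen).trans hexp2
    have h4 : ((m : ℝ) * ((N : ℝ) - m) / (2 * ((N : ℝ) - 1))) / K ^ 2 ≤ Real.log 2 := by
      rw [← Real.exp_le_exp, Real.exp_log two_pos]
      exact h3
    have h5 : (m : ℝ) * ((N : ℝ) - m) / (2 * ((N : ℝ) - 1) * Real.log 2) ≤ K ^ 2 := by
      have hK2 : (0:ℝ) < K ^ 2 := by positivity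
      have h2N : (2:ℝ) ≤ (N:ℝ) := by exact_mod_cast hN
      have hden : (0:ℝ) < 2 * ((N:ℝ) - 1) := by linarith
      rw [div_le_iff₀ hK2] at h4
      rw [div_le_iff₀ (mul_pos hden hlog)]
      rw [div_le_iff₀ hden] at h4
      calc (m : ℝ) * ((N : ℝ) - m) ≤ Real.log 2 * K ^ 2 * (2 * ((N:ℝ)-1)) := h4
        _ = K ^ 2 * (2 * ((N:ℝ)-1) * Real.log 2) := by ring
    calc Real.sqrt ((m : ℝ) * ((N : ℝ) - m) / (2 * ((N : ℝ) - 1) * Real.log 2))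
        ≤ Real.sqrt (K ^ 2) := Real.sqrt_le_sqrt h5
      _ = K := by rw [Real.sqrt_sq hKpos.le]
  · exact csInf_le hbdd hmem
end
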